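/- arXiv:2002.06395 — 7 statements merged into one kernel-verified Lean document; each statement's English description precedes it below -/
import Mathlib

section
/- Let E be an inner product space over ℂ, and let Ψ₀, Ψ₁ ∈ E be orthogonal unit vectors (⟨Ψ₁, Ψ₀⟩ = 0, ‖Ψ₀‖ = ‖Ψ₁‖ = 1). For θ ∈ ℝ set Ψ = sin θ • Ψ₁ + cos θ • Ψ₀, let O : E →ₗ[ℂ] E be a linear map satisfying O Ψ₁ = −Ψ₁ and O Ψ₀ = Ψ₀, and let R : E → E be the reflection R v = (2 : ℂ)⟨Ψ, v⟩ • Ψ − v. Then for every φ ∈ ℝ, R (O (sin φ • Ψ₁ + cos φ • Ψ₀)) = sin (φ + 2θ) • Ψ₁ + cos (φ + 2θ) • Ψ₀; i.e., one step of amplitude amplification acts as a rotation by angle 2θ in the plane spanned by Ψ₀ and Ψ₁. -/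
open scoped InnerProductSpace
open Real

/-- One step of amplitude amplification (oracle followed by reflection about `Ψ`)
acts as a rotation by angle `2θ` in the plane spanned by the orthonormal vectors
`Ψ₀` (bad state) and `Ψ₁` (good state). -/
theorem amplitude_amplification_step_rotation
    {E : Type*} [NormedAddCommGroup E] [InnerProductSpace ℂ E]
    (Ψ₀ Ψ₁ : E)
    (horth : ⟪Ψ₁, Ψ₀⟫_ℂ = 0) (hΨ₀ : ‖Ψ₀‖ = 1) (hΨ₁ : ‖Ψ₁‖ = 1)
    (θ : ℝ)
    (Ψ : E) (hΨ : Ψ = (Real.sin θ : ℂ) • Ψ₁ + (Real.cos θ : ℂ) • Ψ₀)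
    (O : E →ₗ[ℂ] E) (hO₁ : O Ψ₁ = -Ψ₁) (hO₀ : O Ψ₀ = Ψ₀)
    (R : E → E) (hR : ∀ v, R v = ((2 : ℂ) * ⟪Ψ, v⟫_ℂ) • Ψ - v) :
    ∀ φ : ℝ,
      R (O ((Real.sin φ : ℂ) • Ψ₁ + (Real.cos φ : ℂ) • Ψ₀)) =
        (Real.sin (φ + 2 * θ) : ℂ) • Ψ₁ + (Real.cos (φ + 2 * θ) : ℂ) • Ψ₀ := by
  intro φ
  have h11 : ⟪Ψ₁, Ψ₁⟫_ℂ = 1 := by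
    rw [inner_self_eq_norm_sq_to_K, hΨ₁]; norm_num
  have h00 : ⟪Ψ₀, Ψ₀⟫_ℂ = 1 := by
    rw [inner_self_eq_norm_sq_to_K, hΨ₀]; norm_num
  have h01 : ⟪Ψ₀, Ψ₁⟫_ℂ = 0 := by
    rw [← inner_conj_symm, horth]; simp
  have hOv : O ((Real.sin φ : ℂ) • Ψ₁ + (Real.cos φ : ℂ) • Ψ₀)
      = (-(Real.sin φ) : ℂ) • Ψ₁ + (Real.cos φ : ℂ) • Ψ₀ := by
    simp [map_add, map_smul, hO₁, hO₀, smul_neg, neg_smul]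
  rw [hOv, hR]
  have hinner : ⟪Ψ, (-(Real.sin φ) : ℂ) • Ψ₁ + (Real.cos φ : ℂ) • Ψ₀⟫_ℂ
      = (Real.cos (θ + φ) : ℂ) := by
    simp only [hΨ, inner_add_left, inner_add_right, inner_smul_left, inner_smul_right,
      h11, h00, h01, horth, map_neg, Complex.conj_ofReal]
    push_cast [Real.cos_add]
    ring
  rw [hinner, hΨ]
  have hc1 : ((2 : ℂ) * (Real.cos (θ + φ) : ℂ)) * (Real.sin θ : ℂ) - (-(Real.sin φ) : ℂ)
      = (Real.sin (φ + 2 * θ) : ℂ) := by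
    have : Real.sin (φ + 2 * θ) = 2 * Real.cos (θ + φ) * Real.sin θ + Real.sin φ := by
      have h2 : φ + 2 * θ = (θ + φ) + θ := by ring
      rw [h2, Real.sin_add (θ + φ) θ, Real.sin_add θ φ, Real.cos_add θ φ]
      linear_combination (Real.sin φ) * Real.sin_sq_add_cos_sq θ
    push_cast [this]; ring
  have hc0 : ((2 : ℂ) * (Real.cos (θ + φ) : ℂ)) * (Real.cos θ : ℂ) - (Real.cos φ : ℂ)
      = (Real.cos (φ + 2 * θ) : ℂ) := by
    have : Real.cos (φ + 2 * θ) = 2 * Real.cos (θ + φ) * Real.cos θ - Real.cos φ := by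
      have h2 : φ + 2 * θ = (θ + φ) + θ := by ring
      rw [h2, Real.cos_add (θ + φ) θ, Real.sin_add θ φ, Real.cos_add θ φ]
      linear_combination (-(Real.cos φ)) * Real.sin_sq_add_cos_sq θ
    push_cast [this]; ring
  rw [smul_add, smul_smul, smul_smul]
  rw [← hc1, ← hc0]
  module
end

section
/- Let E be an inner product space over ℂ, Ψ₀, Ψ₁ ∈ E orthogonal unit vectors, θ ∈ ℝ, Ψ = sin θ • Ψ₁ + cos θ • Ψ₀, O : E →ₗ[ℂ] E a linear map with O Ψ₁ = −Ψ₁ and O Ψ₀ = Ψ₀, and R v = (2 : ℂ)⟨Ψ, v⟩ • Ψ − v. Then for every natural number n, the n-fold iterate of the amplitude-amplification step Q = R ∘ O applied to Ψ satisfies Q^[n] Ψ = sin ((2n + 1) θ) • Ψ₁ + cos ((2n + 1) θ) • Ψ₀. -/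
open scoped InnerProductSpace
open Real

/-- The `n`-fold iterate of the amplitude-amplification step `Q = R ∘ O`
applied to `Ψ = sin θ • Ψ₁ + cos θ • Ψ₀` gives
`sin ((2n+1)θ) • Ψ₁ + cos ((2n+1)θ) • Ψ₀`. -/
theorem amplitude_amplification_iterate
    {E : Type*} [NormedAddCommGroup E] [InnerProductSpace ℂ E]
    (Ψ₀ Ψ₁ : E)
    (horth : ⟪Ψ₁, Ψ₀⟫_ℂ = 0) (hΨ₀ : ‖Ψ₀‖ = 1) (hΨ₁ : ‖Ψ₁‖ = 1)
    (θ : ℝ)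
    (Ψ : E) (hΨ : Ψ = (Real.sin θ : ℂ) • Ψ₁ + (Real.cos θ : ℂ) • Ψ₀)
    (O : E →ₗ[ℂ] E) (hO₁ : O Ψ₁ = -Ψ₁) (hO₀ : O Ψ₀ = Ψ₀)
    (R : E → E) (hR : ∀ v, R v = ((2 : ℂ) * ⟪Ψ, v⟫_ℂ) • Ψ - v)
    (Q : E → E) (hQ : Q = R ∘ O) :
    ∀ n : ℕ,
      Q^[n] Ψ =
        (Real.sin ((2 * n + 1) * θ) : ℂ) • Ψ₁ +
          (Real.cos ((2 * n + 1) * θ) : ℂ) • Ψ₀ := by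
  have horth' : ⟪Ψ₀, Ψ₁⟫_ℂ = 0 := by
    rw [← inner_conj_symm, horth, map_zero]
  have h11 : ⟪Ψ₁, Ψ₁⟫_ℂ = 1 := by
    rw [inner_self_eq_norm_sq_to_K, hΨ₁]; norm_num
  have h00 : ⟪Ψ₀, Ψ₀⟫_ℂ = 1 := by
    rw [inner_self_eq_norm_sq_to_K, hΨ₀]; norm_num
  -- key step lemma
  have key : ∀ α : ℝ,
      Q ((Real.sin α : ℂ) • Ψ₁ + (Real.cos α : ℂ) • Ψ₀) =
        (Real.sin (2 * θ + α) : ℂ) • Ψ₁ + (Real.cos (2 * θ + α) : ℂ) • Ψ₀ := by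
    intro α
    have hOv : O ((Real.sin α : ℂ) • Ψ₁ + (Real.cos α : ℂ) • Ψ₀)
        = (-(Real.sin α : ℂ)) • Ψ₁ + (Real.cos α : ℂ) • Ψ₀ := by
      simp [map_add, map_smul, hO₁, hO₀, smul_neg, neg_smul]
    have hinner : ⟪Ψ, (-(Real.sin α : ℂ)) • Ψ₁ + (Real.cos α : ℂ) • Ψ₀⟫_ℂ
        = (Real.cos (θ + α) : ℂ) := by
      rw [hΨ]
      simp only [inner_add_add_self, inner_add_left, inner_add_right,
        inner_smul_left, inner_smul_right, horth, horth', h11, h00,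
        Complex.conj_ofReal]
      rw [Real.cos_add]
      push_cast
      ring
    rw [hQ, Function.comp_apply, hOv, hR, hinner, hΨ]
    have e1 := Real.sin_sub (θ + α) θ
    have e2 := Real.sin_add (θ + α) θ
    have e3 := Real.cos_sub (θ + α) θ
    have e4 := Real.cos_add (θ + α) θ
    rw [add_sub_cancel_left] at e1 e3
    have hsr : 2 * Real.cos (θ + α) * Real.sin θ + Real.sin α = Real.sin (2 * θ + α) := by
      rw [show 2 * θ + α = (θ + α) + θ by ring, e2, e1]; ring
    have hcr : 2 * Real.cos (θ + α) * Real.cos θ - Real.cos α = Real.cos (2 * θ + α) := by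
      rw [show 2 * θ + α = (θ + α) + θ by ring, e4, e3]; ring
    have hs : (2 : ℂ) * (Real.cos (θ + α) : ℂ) * (Real.sin θ : ℂ) + (Real.sin α : ℂ)
        = (Real.sin (2 * θ + α) : ℂ) := by rw [← hsr]; push_cast; ring
    have hc : (2 : ℂ) * (Real.cos (θ + α) : ℂ) * (Real.cos θ : ℂ) - (Real.cos α : ℂ)
        = (Real.cos (2 * θ + α) : ℂ) := by rw [← hcr]; push_cast; ring
    rw [smul_add, smul_smul, smul_smul]
    rw [← hs, ← hc]
    module
  intro n
  induction n with
  | zero => simpa using hΨ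
  | succ n ih =>
      rw [Function.iterate_succ_apply', ih, key]
      congr 2 <;> push_cast <;> ring_nf
end

section
/- Let E be an inner product space over ℂ, Ψ₀, Ψ₁ ∈ E orthogonal unit vectors, θ ∈ ℝ, Ψ = sin θ • Ψ₁ + cos θ • Ψ₀, O : E →ₗ[ℂ] E with O Ψ₁ = −Ψ₁ and O Ψ₀ = Ψ₀, R v = (2 : ℂ)⟨Ψ, v⟩ • Ψ − v, and Q = R ∘ O. If e ∈ E satisfies ⟨e, Ψ₀⟩ = 0, then for every natural number n, ‖⟨e, Q^[n] Ψ⟩‖² = sin ((2n + 1) θ)² · ‖⟨e, Ψ₁⟩‖²; and if instead ⟨e, Ψ₁⟩ = 0, then ‖⟨e, Q^[n] Ψ⟩‖² = cos ((2n + 1) θ)² · ‖⟨e, Ψ₀⟩‖². In other words, the probability of measuring outcome e after n rounds of amplitude amplification is amplified by the factor sin²((2n+1)θ) on the good subspace and cos²((2n+1)θ) on the bad subspace. -/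
open scoped InnerProductSpace
open Real

lemma aa_sin_aux (a b : ℝ) :
    Real.sin (a + 2 * b) = 2 * Real.cos (a + b) * Real.sin b + Real.sin a := by
  have h1 : Real.sin ((a + b) + b) = _ := Real.sin_add (a + b) b
  have h2 : Real.sin ((a + b) - b) = _ := Real.sin_sub (a + b) b
  have e1 : (a + b) + b = a + 2 * b := by ring
  have e2 : (a + b) - b = a := by ring
  rw [e1] at h1; rw [e2] at h2
  linarith

lemma aa_cos_aux (a b : ℝ) :
    Real.cos (a + 2 * b) = 2 * Real.cos (a + b) * Real.cos b - Real.cos a := by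
  have h1 : Real.cos ((a + b) + b) = _ := Real.cos_add (a + b) b
  have h2 : Real.cos ((a + b) - b) = _ := Real.cos_sub (a + b) b
  have e1 : (a + b) + b = a + 2 * b := by ring
  have e2 : (a + b) - b = a := by ring
  rw [e1] at h1; rw [e2] at h2
  linarith

/-- After `n` rounds of amplitude amplification, the probability of a measurement
outcome `e` lying in the good subspace is amplified by `sin²((2n+1)θ)`, and that of
an outcome in the bad subspace by `cos²((2n+1)θ)`. -/
theorem amplitude_amplification_measurement_probability
    {E : Type*} [NormedAddCommGroup E] [InnerProductSpace ℂ E]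
    (Ψ₀ Ψ₁ : E)
    (horth : ⟪Ψ₁, Ψ₀⟫_ℂ = 0) (hΨ₀ : ‖Ψ₀‖ = 1) (hΨ₁ : ‖Ψ₁‖ = 1)
    (θ : ℝ)
    (Ψ : E) (hΨ : Ψ = (Real.sin θ : ℂ) • Ψ₁ + (Real.cos θ : ℂ) • Ψ₀)
    (O : E →ₗ[ℂ] E) (hO₁ : O Ψ₁ = -Ψ₁) (hO₀ : O Ψ₀ = Ψ₀)
    (R : E → E) (hR : ∀ v, R v = ((2 : ℂ) * ⟪Ψ, v⟫_ℂ) • Ψ - v)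
    (Q : E → E) (hQ : Q = R ∘ O)
    (e : E) :
    (⟪e, Ψ₀⟫_ℂ = 0 →
      ∀ n : ℕ, ‖⟪e, Q^[n] Ψ⟫_ℂ‖ ^ 2 =
        Real.sin ((2 * n + 1) * θ) ^ 2 * ‖⟪e, Ψ₁⟫_ℂ‖ ^ 2) ∧
    (⟪e, Ψ₁⟫_ℂ = 0 →
      ∀ n : ℕ, ‖⟪e, Q^[n] Ψ⟫_ℂ‖ ^ 2 =
        Real.cos ((2 * n + 1) * θ) ^ 2 * ‖⟪e, Ψ₀⟫_ℂ‖ ^ 2) := by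
  have horth' : ⟪Ψ₀, Ψ₁⟫_ℂ = 0 := by
    rw [← inner_conj_symm, horth, map_zero]
  have h11 : ⟪Ψ₁, Ψ₁⟫_ℂ = 1 := by
    rw [inner_self_eq_norm_sq_to_K, hΨ₁]; norm_num
  have h00 : ⟪Ψ₀, Ψ₀⟫_ℂ = 1 := by
    rw [inner_self_eq_norm_sq_to_K, hΨ₀]; norm_num
  have key : ∀ n : ℕ, Q^[n] Ψ =
      (Real.sin ((2 * n + 1) * θ) : ℂ) • Ψ₁ + (Real.cos ((2 * n + 1) * θ) : ℂ) • Ψ₀ := by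
    intro n
    induction n with
    | zero => simp [hΨ]
    | succ n ih =>
      rw [Function.iterate_succ_apply', ih, hQ]
      simp only [Function.comp_apply, map_add, map_smul, hO₁, hO₀, hR]
      have hin : ⟪Ψ, (Real.sin ((2 * n + 1) * θ) : ℂ) • -Ψ₁
            + (Real.cos ((2 * n + 1) * θ) : ℂ) • Ψ₀⟫_ℂ
          = (Real.cos ((2 * n + 1) * θ + θ) : ℂ) := by
        rw [hΨ]
        simp only [inner_add_left, inner_add_right, inner_smul_left, inner_smul_right,
          inner_neg_right, h11, h00, horth, horth', Complex.conj_ofReal, mul_zero,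
          zero_mul, mul_one, mul_neg, neg_zero, add_zero, zero_add]
        rw [Real.cos_add]
        push_cast
        ring
      rw [hin]
      have t1 : Real.sin ((2 * (n + 1 : ℕ) + 1) * θ)
          = 2 * Real.cos ((2 * n + 1) * θ + θ) * Real.sin θ + Real.sin ((2 * n + 1) * θ) := by
        have := aa_sin_aux ((2 * n + 1) * θ) θ
        have e : (2 * (n + 1 : ℕ) + 1) * θ = (2 * n + 1) * θ + 2 * θ := by push_cast; ring
        rw [e, this]
      have t2 : Real.cos ((2 * (n + 1 : ℕ) + 1) * θ)
          = 2 * Real.cos ((2 * n + 1) * θ + θ) * Real.cos θ - Real.cos ((2 * n + 1) * θ) := by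
        have := aa_cos_aux ((2 * n + 1) * θ) θ
        have e : (2 * (n + 1 : ℕ) + 1) * θ = (2 * n + 1) * θ + 2 * θ := by push_cast; ring
        rw [e, this]
      rw [hΨ, t1, t2]
      push_cast
      match_scalars <;> ring
  constructor
  · intro h0 n
    rw [key n, inner_add_right, inner_smul_right, inner_smul_right, h0, mul_zero, add_zero,
      norm_mul, mul_pow, Complex.norm_real, Real.norm_eq_abs, sq_abs]
  · intro h1 n
    rw [key n, inner_add_right, inner_smul_right, inner_smul_right, h1, mul_zero, zero_add,
      norm_mul, mul_pow, Complex.norm_real, Real.norm_eq_abs, sq_abs]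
end

section
/- Let X and Y be finite nonempty types, f : X → Y → Bool, α : X → ℂ with ∑_x ‖α x‖² = 1, and ν : X → Y → ℝ with ν x y ≥ 0 and ∑_y ν x y = 1 for every x. Define Ψ ∈ EuclideanSpace ℂ (X × Y) by Ψ (x, y) = α x · √(ν x y), a x = ∑_{y : f x y = true} ν x y, p = ∑_x ‖α x‖² · a x, and assume 0 < p < 1. Let θ = arcsin √p, let the oracle O_f : EuclideanSpace ℂ (X × Y) →ₗ[ℂ] EuclideanSpace ℂ (X × Y) be (O_f v) (x, y) = (if f x y then −1 else 1) · v (x, y), let R v = (2 : ℂ)⟨Ψ, v⟩ • Ψ − v, and let G = R ∘ O_f. Then for every natural number n and every action x, the recommendation probability P_n(x) = ∑_y ‖(G^[n] Ψ) (x, y)‖² satisfies P_n(x) = ‖α x‖² · (1 + (a x − p) · C(p, n)), where C(p, n) = (sin ((2n + 1) θ)² − p) / (p · (1 − p)). -/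
open scoped InnerProductSpace
open Real

/-- The recommendation probability of action `x` after `n` rounds of QBAI is
`P_n(x) = ‖α x‖² (1 + (a x − p) C(p,n))` with `C(p,n) = (sin²((2n+1)θ) − p)/(p(1−p))`. -/
theorem qbai_recommendation_probability
    {X Y : Type*} [Fintype X] [Fintype Y] [Nonempty X] [Nonempty Y]
    (f : X → Y → Bool)
    (α : X → ℂ) (hα : ∑ x, ‖α x‖ ^ 2 = 1)
    (ν : X → Y → ℝ) (hν_nonneg : ∀ x y, 0 ≤ ν x y) (hν_sum : ∀ x, ∑ y, ν x y = 1)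
    (Ψ : EuclideanSpace ℂ (X × Y))
    (hΨ : ∀ x y, Ψ (x, y) = α x * (Real.sqrt (ν x y) : ℂ))
    (a : X → ℝ) (ha : ∀ x, a x = ∑ y ∈ Finset.univ.filter (fun y => f x y = true), ν x y)
    (p : ℝ) (hp : p = ∑ x, ‖α x‖ ^ 2 * a x) (hp0 : 0 < p) (hp1 : p < 1)
    (θ : ℝ) (hθ : θ = Real.arcsin (Real.sqrt p))
    (Of : EuclideanSpace ℂ (X × Y) →ₗ[ℂ] EuclideanSpace ℂ (X × Y))
    (hOf : ∀ (v : EuclideanSpace ℂ (X × Y)) (x : X) (y : Y),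
      Of v (x, y) = (if f x y then (-1 : ℂ) else 1) * v (x, y))
    (R : EuclideanSpace ℂ (X × Y) → EuclideanSpace ℂ (X × Y))
    (hR : ∀ v, R v = ((2 : ℂ) * ⟪Ψ, v⟫_ℂ) • Ψ - v)
    (G : EuclideanSpace ℂ (X × Y) → EuclideanSpace ℂ (X × Y)) (hG : G = R ∘ Of)
    (C : ℝ → ℕ → ℝ)
    (hC : ∀ n, C p n = (Real.sin ((2 * n + 1) * θ) ^ 2 - p) / (p * (1 - p)))
    (P : ℕ → X → ℝ) (hP : ∀ n x, P n x = ∑ y, ‖(G^[n] Ψ) (x, y)‖ ^ 2) :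
    ∀ (n : ℕ) (x : X), P n x = ‖α x‖ ^ 2 * (1 + (a x - p) * C p n) := by
  have hp1' : (0:ℝ) < 1 - p := by linarith
  have hs0 : (0:ℝ) < Real.sqrt p := Real.sqrt_pos.mpr hp0
  have hc0 : (0:ℝ) < Real.sqrt (1 - p) := Real.sqrt_pos.mpr hp1'
  have hs2 : Real.sqrt p ^ 2 = p := Real.sq_sqrt hp0.le
  have hc2 : Real.sqrt (1 - p) ^ 2 = 1 - p := Real.sq_sqrt hp1'.le
  have hsinθ : Real.sin θ = Real.sqrt p := by
    rw [hθ, Real.sin_arcsin (by linarith [Real.sqrt_nonneg p])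
      (by nlinarith [Real.sqrt_nonneg p, hs2])]
  have hcosθ : Real.cos θ = Real.sqrt (1 - p) := by
    rw [hθ, Real.cos_arcsin, hs2]
  -- coefficients
  set L : ℕ → ℝ := fun n => Real.sin ((2 * n + 1) * θ) / Real.sqrt p with hLdef
  set M : ℕ → ℝ := fun n => Real.cos ((2 * n + 1) * θ) / Real.sqrt (1 - p) with hMdef
  have hL0 : L 0 = 1 := by
    simp only [hLdef, Nat.cast_zero]
    rw [show ((2:ℝ) * 0 + 1) * θ = θ by ring, hsinθ, div_self hs0.ne']
  have hM0 : M 0 = 1 := by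
    simp only [hMdef, Nat.cast_zero]
    rw [show ((2:ℝ) * 0 + 1) * θ = θ by ring, hcosθ, div_self hc0.ne']
  have harg : ∀ n : ℕ, (2 * ((n:ℝ) + 1) + 1) * θ = (2 * n + 1) * θ + 2 * θ := by
    intro n; ring
  have hLrec : ∀ n : ℕ, L (n + 1) = (1 - 2 * p) * L n + 2 * (1 - p) * M n := by
    intro n
    simp only [hLdef, hMdef, Nat.cast_add, Nat.cast_one]
    rw [harg n, Real.sin_add, Real.sin_two_mul, Real.cos_two_mul, hsinθ, hcosθ]
    field_simp
    linear_combination (2 * Real.sqrt (1 - p) * Real.sin ((2 * (n:ℝ) + 1) * θ) + 2 * Real.cos ((2 * (n:ℝ) + 1) * θ) * Real.sqrt p) * hc2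
  have hMrec : ∀ n : ℕ, M (n + 1) = -(2 * p) * L n + (1 - 2 * p) * M n := by
    intro n
    simp only [hLdef, hMdef, Nat.cast_add, Nat.cast_one]
    rw [harg n, Real.cos_add, Real.sin_two_mul, Real.cos_two_mul, hsinθ, hcosθ]
    field_simp
    linear_combination (2 * Real.sqrt p * Real.cos ((2 * (n:ℝ) + 1) * θ)) * hc2 + (-2 * Real.sqrt (1 - p) * Real.sin ((2 * (n:ℝ) + 1) * θ)) * hs2
  -- pointwise norms
  have hΨnorm : ∀ x y, (starRingEnd ℂ) (Ψ (x, y)) * Ψ (x, y) = ((‖α x‖ ^ 2 * ν x y : ℝ) : ℂ) := by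
    intro x y
    rw [hΨ, map_mul, Complex.conj_ofReal]
    rw [show (starRingEnd ℂ) (α x) * ((Real.sqrt (ν x y) : ℝ) : ℂ) * (α x * ((Real.sqrt (ν x y) : ℝ) : ℂ))
        = ((starRingEnd ℂ) (α x) * α x) * (((Real.sqrt (ν x y) : ℝ) : ℂ) * ((Real.sqrt (ν x y) : ℝ) : ℂ)) from by ring]
    rw [Complex.conj_mul', ← Complex.ofReal_mul, Real.mul_self_sqrt (hν_nonneg x y)]
    push_cast
    ring
  -- sum over y, weighted by ν, of an if-split
  have hsum_ite : ∀ (x : X) (A B : ℝ),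
      ∑ y, (if f x y then A else B) * ν x y = A * a x + B * (1 - a x) := by
    intro x A B
    rw [← Finset.sum_filter_add_sum_filter_not Finset.univ (fun y => f x y = true)]
    have h1 : ∑ y ∈ Finset.univ.filter (fun y => f x y = true), (if f x y then A else B) * ν x y
        = A * a x := by
      rw [ha, Finset.mul_sum]
      apply Finset.sum_congr rfl
      intro y hy
      simp only [Finset.mem_filter] at hy
      rw [if_pos hy.2]
    have h2 : ∑ y ∈ Finset.univ.filter (fun y => ¬ f x y = true), (if f x y then A else B) * ν x y
        = B * (1 - a x) := by
      have hba : ∑ y ∈ Finset.univ.filter (fun y => ¬ f x y = true), ν x y = 1 - a x := by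
        have := Finset.sum_filter_add_sum_filter_not Finset.univ (fun y => f x y = true) (ν x)
        rw [hν_sum x] at this
        rw [ha]; linarith
      rw [← hba, Finset.mul_sum]
      apply Finset.sum_congr rfl
      intro y hy
      simp only [Finset.mem_filter] at hy
      rw [if_neg hy.2]
    rw [h1, h2]
  -- the key induction
  have key : ∀ (n : ℕ) (x : X) (y : Y),
      (G^[n] Ψ) (x, y) = (if f x y then (L n : ℂ) else (M n : ℂ)) * Ψ (x, y) := by
    intro n
    induction n with
    | zero =>
      intro x y
      simp [hL0, hM0]
    | succ n ih =>
      have hinner : ⟪Ψ, Of (G^[n] Ψ)⟫_ℂ = ((-(L n) * p + M n * (1 - p) : ℝ) : ℂ) := by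
        rw [PiLp.inner_apply]
        simp only [RCLike.inner_apply]
        rw [Fintype.sum_prod_type]
        have hterm : ∀ x y, (starRingEnd ℂ) (Ψ (x, y)) * (Of (G^[n] Ψ)) (x, y)
            = ((if f x y then (-(L n)) else M n) * (‖α x‖ ^ 2 * ν x y) : ℝ) := by
          intro x y
          rw [hOf, ih]
          by_cases h : f x y
          · rw [if_pos h, if_pos h, if_pos h]
            rw [show (-1 : ℂ) * ((L n : ℂ) * Ψ (x, y)) = ((-(L n) : ℝ) : ℂ) * Ψ (x, y) from by push_cast; ring]
            rw [mul_comm ((-(L n) : ℝ) : ℂ) (Ψ (x,y)), ← mul_assoc, hΨnorm]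
            push_cast; ring
          · rw [if_neg h, if_neg h, if_neg h]
            rw [show (1 : ℂ) * ((M n : ℂ) * Ψ (x, y)) = ((M n : ℝ) : ℂ) * Ψ (x, y) from by push_cast; ring]
            rw [mul_comm ((M n : ℝ) : ℂ) (Ψ (x,y)), ← mul_assoc, hΨnorm]
            push_cast; ring
        simp_rw [mul_comm ((Of (G^[n] Ψ)) _) ((starRingEnd ℂ) _)]
        calc ∑ x, ∑ y, (starRingEnd ℂ) (Ψ (x, y)) * (Of (G^[n] Ψ)) (x, y)
            = ∑ x, ∑ y, (((if f x y then (-(L n)) else M n) * (‖α x‖ ^ 2 * ν x y) : ℝ) : ℂ) := by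
              apply Finset.sum_congr rfl; intro x _
              apply Finset.sum_congr rfl; intro y _
              exact hterm x y
          _ = ((∑ x, ∑ y, (if f x y then (-(L n)) else M n) * (‖α x‖ ^ 2 * ν x y) : ℝ) : ℂ) := by
              norm_cast
          _ = ((-(L n) * p + M n * (1 - p) : ℝ) : ℂ) := by
              norm_cast
              have heach : ∀ x, ∑ y, (if f x y then (-(L n)) else M n) * (‖α x‖ ^ 2 * ν x y)
                  = -(L n) * (‖α x‖ ^ 2 * a x) + M n * (‖α x‖ ^ 2 - ‖α x‖ ^ 2 * a x) := by
                intro x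
                have h0 := hsum_ite x (-(L n)) (M n)
                have h1 : ∑ y, (if f x y then (-(L n)) else M n) * (‖α x‖ ^ 2 * ν x y)
                    = ‖α x‖ ^ 2 * ∑ y, (if f x y then (-(L n)) else M n) * ν x y := by
                  rw [Finset.mul_sum]; apply Finset.sum_congr rfl; intro y _; ring
                rw [h1, h0]; ring
              rw [Finset.sum_congr rfl (fun x _ => heach x), Finset.sum_add_distrib,
                ← Finset.mul_sum, ← Finset.mul_sum, Finset.sum_sub_distrib, hα, ← hp]
      intro x y
      rw [Function.iterate_succ_apply']
      rw [show G (G^[n] Ψ) = ((2 : ℂ) * ⟪Ψ, Of (G^[n] Ψ)⟫_ℂ) • Ψ - Of (G^[n] Ψ) from by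
        rw [hG, Function.comp_apply, hR]]
      have happ : ∀ (c : ℂ) (w : EuclideanSpace ℂ (X × Y)) (i : X × Y),
          (c • Ψ - w) i = c * Ψ i - w i := fun c w i => rfl
      rw [happ, hinner, hOf, ih]
      by_cases h : f x y
      · rw [if_pos h, if_pos h, if_pos h]
        have hrec : L (n + 1) = 2 * (-(L n) * p + M n * (1 - p)) + L n := by
          rw [hLrec n]; ring
        push_cast [hrec]
        ring
      · rw [if_neg h, if_neg h, if_neg h]
        have hrec : M (n + 1) = 2 * (-(L n) * p + M n * (1 - p)) - M n := by
          rw [hMrec n]; ring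
        push_cast [hrec]
        ring
  -- conclude
  intro n x
  rw [hP, hC]
  have hterm : ∀ y, ‖(G^[n] Ψ) (x, y)‖ ^ 2
      = (if f x y then L n ^ 2 else M n ^ 2) * ν x y * ‖α x‖ ^ 2 := by
    intro y
    rw [key n x y, hΨ]
    by_cases h : f x y
    · rw [if_pos h, if_pos h]
      rw [norm_mul, norm_mul, Complex.norm_real, Complex.norm_real, Real.norm_eq_abs,
        Real.norm_eq_abs, abs_of_nonneg (Real.sqrt_nonneg _)]
      rw [mul_pow, mul_pow, Real.sq_sqrt (hν_nonneg x y), sq_abs]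
      ring
    · rw [if_neg h, if_neg h]
      rw [norm_mul, norm_mul, Complex.norm_real, Complex.norm_real, Real.norm_eq_abs,
        Real.norm_eq_abs, abs_of_nonneg (Real.sqrt_nonneg _)]
      rw [mul_pow, mul_pow, Real.sq_sqrt (hν_nonneg x y), sq_abs]
      ring
  rw [Finset.sum_congr rfl (fun y _ => hterm y)]
  have hpull : ∑ y, (if f x y then L n ^ 2 else M n ^ 2) * ν x y * ‖α x‖ ^ 2
      = (∑ y, (if f x y then L n ^ 2 else M n ^ 2) * ν x y) * ‖α x‖ ^ 2 := by
    rw [Finset.sum_mul]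
  rw [hpull, hsum_ite x (L n ^ 2) (M n ^ 2)]
  have hL2 : L n ^ 2 = Real.sin ((2 * n + 1) * θ) ^ 2 / p := by
    simp only [hLdef]; rw [div_pow, hs2]
  have hM2 : M n ^ 2 = (1 - Real.sin ((2 * n + 1) * θ) ^ 2) / (1 - p) := by
    simp only [hMdef]; rw [div_pow, hc2, Real.cos_sq']
  rw [hL2, hM2]
  field_simp
  ring
end

section
/- (Theorem 1, optimal value.) In the QBAI setting, with Ψ (x, y) = α x · √(ν x y), a x = ∑_{y : f x y = true} ν x y, p = ∑_x ‖α x‖² · a x ∈ (0,1), θ = arcsin √p, oracle (O_f v)(x,y) = (if f x y then −1 else 1) · v(x,y), diffusion R v = 2⟨Ψ, v⟩ • Ψ − v, G = R ∘ O_f, and P_n(x) = ∑_y ‖(G^[n] Ψ)(x,y)‖²: if the natural number n satisfies (2n + 1) · θ = π / 2, then for every action x, P_n(x) = ‖α x‖² · a x / p. In particular, for the optimal action x* (achieving a x* = max_x a x = a*), P_n(x*) = ‖α x*‖² · a* / p. -/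
set_option maxHeartbeats 1000000

open scoped InnerProductSpace
open Real

/-- Theorem 1 (optimal value): if `(2n+1)θ = π/2`, then after `n` rounds of QBAI the
recommendation probability of every action `x` is `‖α x‖² a x / p`; in particular the
optimal action `x*` is recommended with probability `‖α x*‖² a* / p`. -/
theorem qbai_optimal_recommendation_probability
    {X Y : Type*} [Fintype X] [Fintype Y] [Nonempty X] [Nonempty Y]
    (f : X → Y → Bool)
    (α : X → ℂ) (hα : ∑ x, ‖α x‖ ^ 2 = 1)
    (ν : X → Y → ℝ) (hν_nonneg : ∀ x y, 0 ≤ ν x y) (hν_sum : ∀ x, ∑ y, ν x y = 1)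
    (Ψ : EuclideanSpace ℂ (X × Y))
    (hΨ : ∀ x y, Ψ (x, y) = α x * (Real.sqrt (ν x y) : ℂ))
    (a : X → ℝ) (ha : ∀ x, a x = ∑ y ∈ Finset.univ.filter (fun y => f x y = true), ν x y)
    (p : ℝ) (hp : p = ∑ x, ‖α x‖ ^ 2 * a x) (hp0 : 0 < p) (hp1 : p < 1)
    (θ : ℝ) (hθ : θ = Real.arcsin (Real.sqrt p))
    (Of : EuclideanSpace ℂ (X × Y) →ₗ[ℂ] EuclideanSpace ℂ (X × Y))
    (hOf : ∀ (v : EuclideanSpace ℂ (X × Y)) (x : X) (y : Y),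
      Of v (x, y) = (if f x y then (-1 : ℂ) else 1) * v (x, y))
    (R : EuclideanSpace ℂ (X × Y) → EuclideanSpace ℂ (X × Y))
    (hR : ∀ v, R v = ((2 : ℂ) * ⟪Ψ, v⟫_ℂ) • Ψ - v)
    (G : EuclideanSpace ℂ (X × Y) → EuclideanSpace ℂ (X × Y)) (hG : G = R ∘ Of)
    (P : ℕ → X → ℝ) (hP : ∀ n x, P n x = ∑ y, ‖(G^[n] Ψ) (x, y)‖ ^ 2)
    (n : ℕ) (hn : (2 * (n : ℝ) + 1) * θ = Real.pi / 2)
    (xstar : X) (astar : ℝ) (hastar : a xstar = astar)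
    (hmax : ∀ x, a x ≤ astar) :
    (∀ x, P n x = ‖α x‖ ^ 2 * a x / p) ∧
      P n xstar = ‖α xstar‖ ^ 2 * astar / p := by
  classical
  have hp1' : 0 < 1 - p := by linarith
  set sp := Real.sqrt p with hspdef
  set sq := Real.sqrt (1 - p) with hsqdef
  have hsp0 : 0 < sp := Real.sqrt_pos.2 hp0
  have hsq0 : 0 < sq := Real.sqrt_pos.2 hp1'
  have hsp2 : sp ^ 2 = p := Real.sq_sqrt hp0.le
  have hsq2 : sq ^ 2 = 1 - p := Real.sq_sqrt hp1'.le
  have hsinθ : Real.sin θ = sp := by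
    rw [hθ]
    exact Real.sin_arcsin (by linarith [Real.sqrt_nonneg p]) (Real.sqrt_le_one.2 hp1.le)
  have hcosθ : Real.cos θ = sq := by
    rw [hθ, Real.cos_arcsin, Real.sq_sqrt hp0.le]
  -- good and bad unit vectors
  set u : EuclideanSpace ℂ (X × Y) := WithLp.toLp 2 (fun z : X × Y =>
    if f z.1 z.2 then α z.1 * (Real.sqrt (ν z.1 z.2) : ℂ) / (sp : ℂ) else 0) with hudef
  set w : EuclideanSpace ℂ (X × Y) := WithLp.toLp 2 (fun z : X × Y =>
    if f z.1 z.2 then 0 else α z.1 * (Real.sqrt (ν z.1 z.2) : ℂ) / (sq : ℂ)) with hwdef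
  have hnormu : ∀ x y, ‖u (x, y)‖ ^ 2 = if f x y then ‖α x‖ ^ 2 * ν x y / p else 0 := by
    intro x y
    by_cases h : f x y
    · simp only [hudef, h, if_true]
      rw [norm_div, norm_mul, Complex.norm_real, Complex.norm_real,
        Real.norm_of_nonneg (Real.sqrt_nonneg _), Real.norm_of_nonneg hsp0.le,
        div_pow, mul_pow, Real.sq_sqrt (hν_nonneg x y), hsp2]
    · simp [hudef, h]
  have hnormw : ∀ x y, ‖w (x, y)‖ ^ 2 = if f x y then 0 else ‖α x‖ ^ 2 * ν x y / (1 - p) := by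
    intro x y
    by_cases h : f x y
    · simp [hwdef, h]
    · simp only [hwdef, h, Bool.false_eq_true, if_false]
      rw [norm_div, norm_mul, Complex.norm_real, Complex.norm_real,
        Real.norm_of_nonneg (Real.sqrt_nonneg _), Real.norm_of_nonneg hsq0.le,
        div_pow, mul_pow, Real.sq_sqrt (hν_nonneg x y), hsq2]
  have hsumu : ∀ x, ∑ y, ‖u (x, y)‖ ^ 2 = ‖α x‖ ^ 2 * a x / p := by
    intro x
    simp only [hnormu]
    rw [← Finset.sum_filter, ← Finset.sum_div, ← Finset.mul_sum, ← ha x]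
  have hsumw : ∀ x, ∑ y, ‖w (x, y)‖ ^ 2 = ‖α x‖ ^ 2 * (1 - a x) / (1 - p) := by
    intro x
    simp only [hnormw]
    have : ∑ y ∈ Finset.univ.filter (fun y => ¬ (f x y = true)), ν x y = 1 - a x := by
      have h1 := Finset.sum_filter_add_sum_filter_not Finset.univ (fun y => f x y = true)
        (fun y => ν x y)
      rw [hν_sum x] at h1
      rw [ha x]; linarith
    calc ∑ y, (if f x y = true then 0 else ‖α x‖ ^ 2 * ν x y / (1 - p))
        = ∑ y ∈ Finset.univ.filter (fun y => ¬ (f x y = true)),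
            ‖α x‖ ^ 2 * ν x y / (1 - p) := by
          rw [Finset.sum_filter]
          exact Finset.sum_congr rfl (fun y _ => by by_cases h : f x y <;> simp [h])
      _ = ‖α x‖ ^ 2 * (1 - a x) / (1 - p) := by
          rw [← Finset.sum_div, ← Finset.mul_sum, this]
  -- inner products
  have huu : ⟪u, u⟫_ℂ = 1 := by
    rw [PiLp.inner_apply]
    have : ∀ z : X × Y, ⟪u z, u z⟫_ℂ = ((‖u z‖ ^ 2 : ℝ) : ℂ) := by
      intro z; rw [RCLike.inner_apply, RCLike.mul_conj]; norm_cast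
    rw [Finset.sum_congr rfl (fun z _ => this z), ← Complex.ofReal_sum]
    norm_cast
    rw [Fintype.sum_prod_type]
    rw [Finset.sum_congr rfl (fun x _ => hsumu x), ← Finset.sum_div, ← hp,
      div_self hp0.ne']
  have hww : ⟪w, w⟫_ℂ = 1 := by
    rw [PiLp.inner_apply]
    have : ∀ z : X × Y, ⟪w z, w z⟫_ℂ = ((‖w z‖ ^ 2 : ℝ) : ℂ) := by
      intro z; rw [RCLike.inner_apply, RCLike.mul_conj]; norm_cast
    rw [Finset.sum_congr rfl (fun z _ => this z), ← Complex.ofReal_sum]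
    norm_cast
    rw [Fintype.sum_prod_type]
    rw [Finset.sum_congr rfl (fun x _ => hsumw x), ← Finset.sum_div]
    have : ∑ x, ‖α x‖ ^ 2 * (1 - a x) = 1 - p := by
      have : ∑ x, ‖α x‖ ^ 2 * (1 - a x) = (∑ x, ‖α x‖ ^ 2) - ∑ x, ‖α x‖ ^ 2 * a x := by
        rw [← Finset.sum_sub_distrib]; exact Finset.sum_congr rfl (fun x _ => by ring)
      rw [this, hα, ← hp]
    rw [this, div_self hp1'.ne']
  have huw : ⟪u, w⟫_ℂ = 0 := by
    rw [PiLp.inner_apply]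
    apply Finset.sum_eq_zero
    intro z _
    rw [RCLike.inner_apply]
    by_cases h : f z.1 z.2 <;> simp [hudef, hwdef, h]
  have hwu : ⟪w, u⟫_ℂ = 0 := by
    rw [← inner_conj_symm, huw]; simp
  -- decomposition of Ψ
  have hspne : (sp : ℂ) ≠ 0 := by exact_mod_cast hsp0.ne'
  have hsqne : (sq : ℂ) ≠ 0 := by exact_mod_cast hsq0.ne'
  have hΨd : Ψ = (sp : ℂ) • u + (sq : ℂ) • w := by
    ext z
    obtain ⟨x, y⟩ := z
    rw [PiLp.add_apply, PiLp.smul_apply, PiLp.smul_apply, hΨ x y]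
    by_cases h : f x y
    · simp only [hudef, hwdef, h, if_true, smul_eq_mul, mul_zero, add_zero]
      field_simp
    · simp only [hudef, hwdef, h, Bool.false_eq_true, if_false, smul_eq_mul, mul_zero, zero_add]
      field_simp
  have hΨu : ⟪Ψ, u⟫_ℂ = (sp : ℂ) := by
    rw [hΨd, inner_add_left, inner_smul_left, inner_smul_left, huu, hwu]
    simp [Complex.conj_ofReal]
  have hΨw : ⟪Ψ, w⟫_ℂ = (sq : ℂ) := by
    rw [hΨd, inner_add_left, inner_smul_left, inner_smul_left, huw, hww]
    simp [Complex.conj_ofReal]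
  -- action of the oracle
  have hOfu : Of u = -u := by
    ext z
    have := hOf u z.1 z.2
    rw [show ((z.1, z.2) : X × Y) = z from rfl] at this
    rw [this]
    by_cases h : f z.1 z.2 <;> simp [hudef, h]
  have hOfw : Of w = w := by
    ext z
    have := hOf w z.1 z.2
    rw [show ((z.1, z.2) : X × Y) = z from rfl] at this
    rw [this]
    by_cases h : f z.1 z.2 <;> simp [hwdef, h]
  -- double-angle facts
  have h2c : Real.cos (2 * θ) = 1 - 2 * p := by
    rw [Real.cos_two_mul, hcosθ]; nlinarith [hsq2]
  have h2s : Real.sin (2 * θ) = 2 * sp * sq := by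
    rw [Real.sin_two_mul, hsinθ, hcosθ]
  -- key iteration formula
  have key : ∀ k : ℕ, G^[k] Ψ =
      (Real.sin ((2 * (k : ℝ) + 1) * θ) : ℂ) • u + (Real.cos ((2 * (k : ℝ) + 1) * θ) : ℂ) • w := by
    intro k
    induction k with
    | zero =>
      simp only [Function.iterate_zero, id_eq, Nat.cast_zero]
      rw [show (2 * (0:ℝ) + 1) * θ = θ by ring, hsinθ, hcosθ, hΨd]
    | succ k ih =>
      rw [Function.iterate_succ_apply', ih, hG]
      set s := Real.sin ((2 * (k : ℝ) + 1) * θ) with hs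
      set c := Real.cos ((2 * (k : ℝ) + 1) * θ) with hc
      have hang : (2 * ((k:ℝ) + 1) + 1) * θ = (2 * (k : ℝ) + 1) * θ + 2 * θ := by ring
      have hA : Real.sin ((2 * ((k:ℝ) + 1) + 1) * θ) = 2 * (-s * sp + c * sq) * sp + s := by
        rw [hang, Real.sin_add, h2c, h2s, ← hs, ← hc]
        linear_combination (2 * s) * hsp2
      have hB : Real.cos ((2 * ((k:ℝ) + 1) + 1) * θ) = 2 * (-s * sp + c * sq) * sq - c := by
        rw [hang, Real.cos_add, h2c, h2s, ← hs, ← hc]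
        linear_combination (-2 * c) * hsq2
      have hOfv : Of ((s : ℂ) • u + (c : ℂ) • w) = ((-s : ℝ) : ℂ) • u + (c : ℂ) • w := by
        rw [map_add, map_smul, map_smul, hOfu, hOfw, smul_neg, ← neg_smul]
        norm_cast
      simp only [Function.comp_apply, hOfv, hR]
      rw [inner_add_right, inner_smul_right, inner_smul_right, hΨu, hΨw, hΨd]
      push_cast [hA, hB]
      module
  -- conclusion
  have hGn : G^[n] Ψ = u := by
    rw [key n, hn, Real.sin_pi_div_two, Real.cos_pi_div_two]
    push_cast
    simp
  have hmain : ∀ x, P n x = ‖α x‖ ^ 2 * a x / p := by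
    intro x
    rw [hP, hGn, hsumu]
  refine ⟨hmain, ?_⟩
  rw [hmain xstar, hastar]
end

section
/- (Theorem 1, maximality.) In the QBAI setting, with Ψ (x, y) = α x · √(ν x y), a x = ∑_{y : f x y = true} ν x y, p = ∑_x ‖α x‖² · a x ∈ (0,1), θ = arcsin √p, oracle (O_f v)(x,y) = (if f x y then −1 else 1) · v(x,y), diffusion R v = 2⟨Ψ, v⟩ • Ψ − v, G = R ∘ O_f, and P_n(x) = ∑_y ‖(G^[n] Ψ)(x,y)‖²: if x* is an action with a x* ≥ a x for all x, then for every natural number n, P_n(x*) ≤ ‖α x*‖² · a x* / p. That is, the value ‖α x*‖² a*/p attained when sin²((2n+1)θ) = 1 is the maximal possible recommendation probability for the optimal action. -/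
open scoped InnerProductSpace
open Real

/-- Theorem 1 (maximality): for every number of rounds `n`, the probability that QBAI
recommends the optimal action `x*` is at most `‖α x*‖² a x* / p`. -/
theorem qbai_recommendation_probability_le
    {X Y : Type*} [Fintype X] [Fintype Y] [Nonempty X] [Nonempty Y]
    (f : X → Y → Bool)
    (α : X → ℂ) (hα : ∑ x, ‖α x‖ ^ 2 = 1)
    (ν : X → Y → ℝ) (hν_nonneg : ∀ x y, 0 ≤ ν x y) (hν_sum : ∀ x, ∑ y, ν x y = 1)
    (Ψ : EuclideanSpace ℂ (X × Y))
    (hΨ : ∀ x y, Ψ (x, y) = α x * (Real.sqrt (ν x y) : ℂ))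
    (a : X → ℝ) (ha : ∀ x, a x = ∑ y ∈ Finset.univ.filter (fun y => f x y = true), ν x y)
    (p : ℝ) (hp : p = ∑ x, ‖α x‖ ^ 2 * a x) (hp0 : 0 < p) (hp1 : p < 1)
    (θ : ℝ) (hθ : θ = Real.arcsin (Real.sqrt p))
    (Of : EuclideanSpace ℂ (X × Y) →ₗ[ℂ] EuclideanSpace ℂ (X × Y))
    (hOf : ∀ (v : EuclideanSpace ℂ (X × Y)) (x : X) (y : Y),
      Of v (x, y) = (if f x y then (-1 : ℂ) else 1) * v (x, y))
    (R : EuclideanSpace ℂ (X × Y) → EuclideanSpace ℂ (X × Y))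
    (hR : ∀ v, R v = ((2 : ℂ) * ⟪Ψ, v⟫_ℂ) • Ψ - v)
    (G : EuclideanSpace ℂ (X × Y) → EuclideanSpace ℂ (X × Y)) (hG : G = R ∘ Of)
    (P : ℕ → X → ℝ) (hP : ∀ n x, P n x = ∑ y, ‖(G^[n] Ψ) (x, y)‖ ^ 2)
    (xstar : X) (hmax : ∀ x, a x ≤ a xstar) :
    ∀ n : ℕ, P n xstar ≤ ‖α xstar‖ ^ 2 * a xstar / p := by
  intro n
  set q : ℝ := 1 - p with hqdef
  have hq0 : 0 < q := by simp only [hqdef]; linarith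
  set sp : ℝ := Real.sqrt p with hspdef
  set sq : ℝ := Real.sqrt q with hsqdef
  have hsp2 : sp ^ 2 = p := Real.sq_sqrt hp0.le
  have hsq2 : sq ^ 2 = q := Real.sq_sqrt hq0.le
  have hsp0 : sp ≠ 0 := ne_of_gt (Real.sqrt_pos.mpr hp0)
  have hsq0 : sq ≠ 0 := ne_of_gt (Real.sqrt_pos.mpr hq0)
  -- total weight per action
  have htot : ∀ x, ∑ y, ‖α x‖ ^ 2 * ν x y = ‖α x‖ ^ 2 := by
    intro x; rw [← Finset.mul_sum, hν_sum x, mul_one]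
  have hsplit : ∀ x, (∑ y ∈ Finset.univ.filter (fun y => f x y = true), ‖α x‖ ^ 2 * ν x y)
      + (∑ y ∈ Finset.univ.filter (fun y => ¬ (f x y = true)), ‖α x‖ ^ 2 * ν x y)
      = ‖α x‖ ^ 2 := by
    intro x; rw [Finset.sum_filter_add_sum_filter_not]; exact htot x
  have hgood : ∑ x, ∑ y ∈ Finset.univ.filter (fun y => f x y = true), ‖α x‖ ^ 2 * ν x y = p := by
    rw [hp]; refine Finset.sum_congr rfl fun x _ => ?_
    rw [ha, Finset.mul_sum]
  have hbad : ∑ x, ∑ y ∈ Finset.univ.filter (fun y => ¬ (f x y = true)), ‖α x‖ ^ 2 * ν x y = q := by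
    have h1 : ∑ x, ((∑ y ∈ Finset.univ.filter (fun y => f x y = true), ‖α x‖ ^ 2 * ν x y)
        + (∑ y ∈ Finset.univ.filter (fun y => ¬ (f x y = true)), ‖α x‖ ^ 2 * ν x y)) = 1 := by
      rw [Finset.sum_congr rfl fun x _ => hsplit x]; exact hα
    rw [Finset.sum_add_distrib, hgood] at h1
    simp only [hqdef]; linarith
  -- inner product with Ψ of a vector of the special form
  have hinner : ∀ (w : EuclideanSpace ℂ (X × Y)) (u v : ℂ),
      (∀ x y, w (x, y) = α x * (Real.sqrt (ν x y) : ℂ) * (if f x y then u else v)) →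
      ⟪Ψ, w⟫_ℂ = (p : ℂ) * u + (q : ℂ) * v := by
    intro w u v hw
    have hip : ⟪Ψ, w⟫_ℂ = ∑ i : X × Y, (starRingEnd ℂ) (Ψ i) * w i := by
      simp [PiLp.inner_apply, RCLike.inner_apply]
      exact Finset.sum_congr rfl fun _ _ => mul_comm _ _
    rw [hip, Fintype.sum_prod_type]
    have hterm : ∀ x y, (starRingEnd ℂ) (Ψ (x, y)) * w (x, y)
        = ((‖α x‖ ^ 2 * ν x y : ℝ) : ℂ) * (if f x y then u else v) := by
      intro x y
      rw [hΨ, hw, map_mul, Complex.conj_ofReal]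
      have hz : (starRingEnd ℂ) (α x) * α x = ((‖α x‖ ^ 2 : ℝ) : ℂ) := by
        rw [mul_comm, Complex.mul_conj']; push_cast; ring
      have hs : ((Real.sqrt (ν x y) : ℝ) : ℂ) * ((Real.sqrt (ν x y) : ℝ) : ℂ)
          = ((ν x y : ℝ) : ℂ) := by
        rw [← Complex.ofReal_mul, Real.mul_self_sqrt (hν_nonneg x y)]
      calc (starRingEnd ℂ) (α x) * (Real.sqrt (ν x y) : ℂ)
            * (α x * (Real.sqrt (ν x y) : ℂ) * (if f x y then u else v))
          = ((starRingEnd ℂ) (α x) * α x) * ((Real.sqrt (ν x y) : ℂ) * (Real.sqrt (ν x y) : ℂ))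
            * (if f x y then u else v) := by ring
        _ = ((‖α x‖ ^ 2 : ℝ) : ℂ) * ((ν x y : ℝ) : ℂ) * (if f x y then u else v) := by
            rw [hz, hs]
        _ = _ := by push_cast; ring
    calc ∑ x, ∑ y, (starRingEnd ℂ) (Ψ (x, y)) * w (x, y)
        = ∑ x, ∑ y, ((‖α x‖ ^ 2 * ν x y : ℝ) : ℂ) * (if f x y then u else v) := by
          refine Finset.sum_congr rfl fun x _ => Finset.sum_congr rfl fun y _ => hterm x y
      _ = ∑ x, ((∑ y ∈ Finset.univ.filter (fun y => f x y = true),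
              ((‖α x‖ ^ 2 * ν x y : ℝ) : ℂ)) * u
            + (∑ y ∈ Finset.univ.filter (fun y => ¬ (f x y = true)),
              ((‖α x‖ ^ 2 * ν x y : ℝ) : ℂ)) * v) := by
          refine Finset.sum_congr rfl fun x _ => ?_
          rw [← Finset.sum_filter_add_sum_filter_not Finset.univ (fun y => f x y = true)]
          rw [Finset.sum_mul, Finset.sum_mul]
          congr 1
          · refine Finset.sum_congr rfl fun y hy => ?_
            rw [if_pos (Finset.mem_filter.mp hy).2]
          · refine Finset.sum_congr rfl fun y hy => ?_
            rw [if_neg (Finset.mem_filter.mp hy).2]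
      _ = (p : ℂ) * u + (q : ℂ) * v := by
          rw [Finset.sum_add_distrib, ← Finset.sum_mul, ← Finset.sum_mul]
          have c1 : (∑ x, ∑ y ∈ Finset.univ.filter (fun y => f x y = true),
              ((‖α x‖ ^ 2 * ν x y : ℝ) : ℂ)) = (p : ℂ) := by exact_mod_cast hgood
          have c2 : (∑ x, ∑ y ∈ Finset.univ.filter (fun y => ¬ (f x y = true)),
              ((‖α x‖ ^ 2 * ν x y : ℝ) : ℂ)) = (q : ℂ) := by exact_mod_cast hbad
          rw [c1, c2]
  -- the key invariant
  have key : ∀ m : ℕ, ∃ s c : ℝ, s ^ 2 + c ^ 2 = 1 ∧ ∀ x y,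
      (G^[m] Ψ) (x, y) = α x * (Real.sqrt (ν x y) : ℂ)
        * (if f x y then ((s / sp : ℝ) : ℂ) else ((c / sq : ℝ) : ℂ)) := by
    intro m
    induction m with
    | zero =>
      refine ⟨sp, sq, by rw [hsp2, hsq2]; simp only [hqdef]; ring, fun x y => ?_⟩
      simp only [Function.iterate_zero, id_eq]
      rw [hΨ, div_self hsp0, div_self hsq0]
      simp
    | succ m ih =>
      obtain ⟨s, c, hsc, hw⟩ := ih
      set w : EuclideanSpace ℂ (X × Y) := G^[m] Ψ with hwdef
      refine ⟨(1 - 2 * p) * s + 2 * sp * sq * c, (1 - 2 * p) * c - 2 * sp * sq * s, ?_, ?_⟩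
      · have e : ((1 - 2 * p) * s + 2 * sp * sq * c) ^ 2
            + ((1 - 2 * p) * c - 2 * sp * sq * s) ^ 2
            = (s ^ 2 + c ^ 2) * ((1 - 2 * p) ^ 2 + 4 * (sp ^ 2) * (sq ^ 2)) := by ring
        rw [e, hsc, hsp2, hsq2, one_mul, hqdef]; ring
      · intro x y
        have hOfw : ∀ x y, (Of w) (x, y) = α x * (Real.sqrt (ν x y) : ℂ)
            * (if f x y then ((-(s / sp) : ℝ) : ℂ) else ((c / sq : ℝ) : ℂ)) := by
          intro x y
          rw [hOf, hw]
          by_cases h : f x y = true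
          · rw [if_pos h, if_pos h, if_pos h]; push_cast; ring
          · rw [if_neg h, if_neg h, if_neg h]; push_cast; ring
        have hr : p * (-(s / sp)) + q * (c / sq) = c * sq - s * sp := by
          rw [← hsp2, ← hsq2]; field_simp; ring
        have hin : ⟪Ψ, Of w⟫_ℂ = ((c * sq - s * sp : ℝ) : ℂ) := by
          rw [hinner (Of w) _ _ hOfw]
          calc (p : ℂ) * ((-(s / sp) : ℝ) : ℂ) + (q : ℂ) * ((c / sq : ℝ) : ℂ)
              = ((p * (-(s / sp)) + q * (c / sq) : ℝ) : ℂ) := by push_cast; ring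
            _ = _ := by rw [hr]
        have hstep : G^[m+1] Ψ = R (Of w) := by
          rw [Function.iterate_succ_apply', ← hwdef, hG]; rfl
        rw [hstep, hR]
        have hcoord : (((2 : ℂ) * ⟪Ψ, Of w⟫_ℂ) • Ψ - Of w) (x, y)
            = (2 : ℂ) * ⟪Ψ, Of w⟫_ℂ * Ψ (x, y) - (Of w) (x, y) := rfl
        rw [hcoord, hin, hΨ, hOfw]
        by_cases h : f x y = true
        · rw [if_pos h, if_pos h]
          have hr2 : ((1 - 2 * p) * s + 2 * sp * sq * c) / sp
              = 2 * (c * sq - s * sp) + s / sp := by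
            field_simp
            linear_combination (2 * s) * hsp2
          rw [hr2]
          push_cast
          ring
        · rw [if_neg h, if_neg h]
          have hr2 : ((1 - 2 * p) * c - 2 * sp * sq * s) / sq
              = 2 * (c * sq - s * sp) - c / sq := by
            rw [div_eq_iff hsq0, sub_mul (2 * (c * sq - s * sp)), div_mul_cancel₀ _ hsq0]
            linear_combination (-2*c) * hsq2 + (-2*c) * hqdef
          rw [hr2]
          push_cast
          ring
  obtain ⟨s, c, hsc, hw⟩ := key n
  -- compute P n xstar
  have hgoodx : ∑ y ∈ Finset.univ.filter (fun y => f xstar y = true), ν xstar y = a xstar :=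
    (ha xstar).symm
  have hbadx : ∑ y ∈ Finset.univ.filter (fun y => ¬ (f xstar y = true)), ν xstar y
      = 1 - a xstar := by
    have h := Finset.sum_filter_add_sum_filter_not Finset.univ (fun y => f xstar y = true)
      (fun y => ν xstar y)
    rw [hgoodx] at h
    rw [hν_sum xstar] at h
    linarith
  have hnorm : ∀ x y (r : ℝ), ‖α x * (Real.sqrt (ν x y) : ℂ) * ((r : ℝ) : ℂ)‖ ^ 2
      = ‖α x‖ ^ 2 * ν x y * r ^ 2 := by
    intro x y r
    rw [norm_mul, norm_mul, Complex.norm_real, Complex.norm_real, Real.norm_eq_abs,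
      Real.norm_eq_abs, mul_pow, mul_pow, sq_abs, sq_abs, Real.sq_sqrt (hν_nonneg x y)]
  have hPval : P n xstar
      = ‖α xstar‖ ^ 2 * (a xstar * (s / sp) ^ 2 + (1 - a xstar) * (c / sq) ^ 2) := by
    rw [hP]
    rw [← Finset.sum_filter_add_sum_filter_not Finset.univ (fun y => f xstar y = true)]
    have h1 : ∑ y ∈ Finset.univ.filter (fun y => f xstar y = true), ‖(G^[n] Ψ) (xstar, y)‖ ^ 2
        = ‖α xstar‖ ^ 2 * a xstar * (s / sp) ^ 2 := by
      rw [← hgoodx, Finset.mul_sum, Finset.sum_mul]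
      refine Finset.sum_congr rfl fun y hy => ?_
      rw [hw, if_pos (Finset.mem_filter.mp hy).2, hnorm]; try ring
    have h2 : ∑ y ∈ Finset.univ.filter (fun y => ¬ (f xstar y = true)), ‖(G^[n] Ψ) (xstar, y)‖ ^ 2
        = ‖α xstar‖ ^ 2 * (1 - a xstar) * (c / sq) ^ 2 := by
      rw [← hbadx, Finset.mul_sum, Finset.sum_mul]
      refine Finset.sum_congr rfl fun y hy => ?_
      rw [hw, if_neg (Finset.mem_filter.mp hy).2, hnorm]; try ring
    rw [h1, h2]; ring
  -- p ≤ a xstar ≤ 1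
  have hpa : p ≤ a xstar := by
    rw [hp]
    calc ∑ x, ‖α x‖ ^ 2 * a x ≤ ∑ x, ‖α x‖ ^ 2 * a xstar :=
          Finset.sum_le_sum fun x _ => mul_le_mul_of_nonneg_left (hmax x) (by positivity)
      _ = a xstar := by rw [← Finset.sum_mul, hα, one_mul]
  have ha1 : a xstar ≤ 1 := by
    rw [ha, ← hν_sum xstar]
    exact Finset.sum_le_sum_of_subset_of_nonneg (Finset.filter_subset _ _)
      (fun y _ _ => hν_nonneg xstar y)
  -- final inequality
  have hfr : (1 - a xstar) / q ≤ a xstar / p := by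
    rw [div_le_div_iff₀ hq0 hp0]
    simp only [hqdef]
    nlinarith
  have hc2 : (0:ℝ) ≤ c ^ 2 := sq_nonneg c
  have hkey : a xstar * (s / sp) ^ 2 + (1 - a xstar) * (c / sq) ^ 2 ≤ a xstar / p := by
    rw [div_pow, div_pow, hsp2, hsq2]
    calc a xstar * (s ^ 2 / p) + (1 - a xstar) * (c ^ 2 / q)
        = a xstar / p * s ^ 2 + (1 - a xstar) / q * c ^ 2 := by ring
      _ ≤ a xstar / p * s ^ 2 + a xstar / p * c ^ 2 := by
          have h := mul_le_mul_of_nonneg_right hfr hc2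
          linarith
      _ = a xstar / p := by rw [← mul_add, hsc, mul_one]
  rw [hPval, mul_div_assoc]
  exact mul_le_mul_of_nonneg_left hkey (by positivity)
end

section
/- Let X be a finite type with card X = N ≥ 1, let a : X → ℝ with 0 ≤ a x for all x, let x* ∈ X with a x* = a* where a* > 0 and a x ≤ a* for all x, and suppose Δ x = a* − a x > 0 for every x ≠ x*, with moreover Δ x ≤ a* for x ≠ x*. Then, writing E = (1/N) ∑_x a x and H₁ = ∑_{x ≠ x*} (Δ x)⁻², one has √E · H₁ ≥ (N − 1) / (√N · a*^{3/2}). (This is the estimate used to show the classical-to-quantum round ratio grows at least like √N, i.e., the QBAI speedup over UCB-E is quadratic in the number of actions.) -/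
open Real

/-- The estimate `√E · H₁ ≥ (N − 1)/(√N · a*^{3/2})` showing that the
classical-to-quantum round ratio grows at least like `√N`. -/
theorem qbai_speedup_estimate
    {X : Type*} [Fintype X] [DecidableEq X]
    (N : ℕ) (hN : Fintype.card X = N) (hN1 : 1 ≤ N)
    (a : X → ℝ) (ha_nonneg : ∀ x, 0 ≤ a x)
    (xstar : X) (astar : ℝ) (hastar : a xstar = astar) (hastar_pos : 0 < astar)
    (hmax : ∀ x, a x ≤ astar)
    (Δ : X → ℝ) (hΔ : ∀ x, Δ x = astar - a x)
    (hΔ_pos : ∀ x, x ≠ xstar → 0 < Δ x) (hΔ_le : ∀ x, x ≠ xstar → Δ x ≤ astar)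
    (E : ℝ) (hE : E = (1 / (N : ℝ)) * ∑ x, a x)
    (H₁ : ℝ) (hH₁ : H₁ = ∑ x ∈ Finset.univ.filter (fun x => x ≠ xstar), (Δ x)⁻¹ ^ 2) :
    Real.sqrt E * H₁ ≥ ((N : ℝ) - 1) / (Real.sqrt N * astar ^ ((3 : ℝ) / 2)) := by
  have hNpos : (0:ℝ) < N := by exact_mod_cast Nat.lt_of_lt_of_le Nat.zero_lt_one hN1
  have hsum : astar ≤ ∑ x, a x := by
    rw [← hastar]
    exact Finset.single_le_sum (fun x _ => ha_nonneg x) (Finset.mem_univ xstar)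
  have hE_ge : astar / N ≤ E := by
    rw [hE, div_eq_mul_inv, mul_comm, ← one_div]
    exact mul_le_mul_of_nonneg_left hsum (by positivity)
  have hsE : Real.sqrt astar / Real.sqrt N ≤ Real.sqrt E := by
    have h := Real.sqrt_le_sqrt hE_ge
    rwa [Real.sqrt_div hastar_pos.le] at h
  have hcard : (Finset.univ.filter (fun x => x ≠ xstar)).card = N - 1 := by
    rw [Finset.filter_ne', Finset.card_erase_of_mem (Finset.mem_univ xstar),
      Finset.card_univ, hN]
  have hH : ((N:ℝ) - 1) * (astar ^ 2)⁻¹ ≤ H₁ := by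
    rw [hH₁]
    calc ((N:ℝ) - 1) * (astar ^ 2)⁻¹
        = ∑ _x ∈ Finset.univ.filter (fun x => x ≠ xstar), (astar ^ 2)⁻¹ := by
          rw [Finset.sum_const, hcard, nsmul_eq_mul, Nat.cast_sub hN1]
          norm_num
      _ ≤ ∑ x ∈ Finset.univ.filter (fun x => x ≠ xstar), (Δ x)⁻¹ ^ 2 := by
          apply Finset.sum_le_sum
          intro x hx
          have hx' : x ≠ xstar := (Finset.mem_filter.mp hx).2
          have h1 := hΔ_pos x hx'
          have h2 := hΔ_le x hx'
          rw [inv_pow]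
          apply inv_anti₀ (by positivity)
          nlinarith
  have hsa : Real.sqrt astar * Real.sqrt astar = astar := Real.mul_self_sqrt hastar_pos.le
  have h32 : astar ^ ((3:ℝ)/2) = astar * Real.sqrt astar := by
    rw [show (3:ℝ)/2 = 1 + 1/2 by norm_num, Real.rpow_add hastar_pos, Real.rpow_one,
      Real.sqrt_eq_rpow]
  have hsN : (0:ℝ) < Real.sqrt N := Real.sqrt_pos.mpr hNpos
  have hsapos : (0:ℝ) < Real.sqrt astar := Real.sqrt_pos.mpr hastar_pos
  have key : (Real.sqrt astar / Real.sqrt N) * (((N:ℝ) - 1) * (astar ^ 2)⁻¹)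
      ≤ Real.sqrt E * H₁ := by
    have hN1' : (1:ℝ) ≤ N := by exact_mod_cast hN1
    apply mul_le_mul hsE hH (mul_nonneg (by linarith) (by positivity)) (Real.sqrt_nonneg _)
  rw [ge_iff_le, h32]
  refine le_trans (le_of_eq ?_) key
  field_simp
  linear_combination (-((N:ℝ)-1))*hsa
end
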